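/- arXiv:0807.4490 — 4 statements merged into one kernel-verified Lean document; each statement's English description precedes it below -/
import Mathlib

section
/- Quantum discord is bounded above by the entropy of the measured subsystem: D(A,B) ≤ H(ρ_A). -/
open Matrix Kronecker ComplexOrder

/-- Von Neumann entropy of a (Hermitian) matrix: `-Σ λ_i log λ_i` over its eigenvalues. -/
noncomputable def vnEntropy {n : Type*} [Fintype n] [DecidableEq n]
    (A : Matrix n n ℂ) : ℝ :=
  if h : A.IsHermitian then ∑ i, Real.negMulLog (h.eigenvalues i) else 0

/-- Partial trace over the first subsystem. -/
noncomputable def ptrFst {α β : Type*} [Fintype α]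
    (ρ : Matrix (α × β) (α × β) ℂ) : Matrix β β ℂ :=
  Matrix.of fun j j' => ∑ i, ρ (i, j) (i, j')

/-- Partial trace over the second subsystem. -/
noncomputable def ptrSnd {α β : Type*} [Fintype β]
    (ρ : Matrix (α × β) (α × β) ℂ) : Matrix α α ℂ :=
  Matrix.of fun i i' => ∑ j, ρ (i, j) (i', j)

/-- Outcome probability `p = tr(ρ (P ⊗ I))` for a measurement operator `P` on the
first subsystem. -/
noncomputable def measProb {α β : Type*} [Fintype α] [Fintype β] [DecidableEq α] [DecidableEq β]
    (ρ : Matrix (α × β) (α × β) ℂ) (P : Matrix α α ℂ) : ℝ :=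
  ((ρ * (P ⊗ₖ (1 : Matrix β β ℂ))).trace).re

/-- Conditional post-measurement state `ρ_{B|P} = tr_A((P⊗I) ρ (P⊗I)) / p`. -/
noncomputable def postState {α β : Type*} [Fintype α] [Fintype β] [DecidableEq α] [DecidableEq β]
    (ρ : Matrix (α × β) (α × β) ℂ) (P : Matrix α α ℂ) : Matrix β β ℂ :=
  (measProb ρ P)⁻¹ •
    ptrFst ((P ⊗ₖ (1 : Matrix β β ℂ)) * ρ * (P ⊗ₖ (1 : Matrix β β ℂ)))

/-- A complete projective measurement on a system `α`: a complete set of mutually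
orthogonal Hermitian projectors summing to the identity. -/
structure ProjMeas (α : Type*) [Fintype α] [DecidableEq α] where
  P : α → Matrix α α ℂ
  herm : ∀ j, (P j).IsHermitian
  idem : ∀ j, P j * P j = P j
  orth : ∀ j k, j ≠ k → P j * P k = 0
  comp : ∑ j, P j = 1

/-- Measured conditional entropy: the minimum over complete projective measurements on `A`
of `Σ_j p_j H(ρ_{B|j})`. -/
noncomputable def condEntA {α β : Type*} [Fintype α] [Fintype β] [DecidableEq α] [DecidableEq β]
    (ρ : Matrix (α × β) (α × β) ℂ) : ℝ :=
  ⨅ m : ProjMeas α, ∑ j, measProb ρ (m.P j) * vnEntropy (postState ρ (m.P j))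

/-- Quantum discord with measurement on the first subsystem `A`:
`D(A,B) = H(ρ_A) − H(ρ_{AB}) + min_Π Σ_j p_j H(ρ_{B|j})`. -/
noncomputable def discordA {α β : Type*} [Fintype α] [Fintype β] [DecidableEq α] [DecidableEq β]
    (ρ : Matrix (α × β) (α × β) ℂ) : ℝ :=
  vnEntropy (ptrSnd ρ) - vnEntropy ρ + condEntA ρ

/-!
Measure `A` in its standard basis and write `ρ = R Rᴴ`, where the columns of `R` are the
eigenvectors of `ρ` scaled by the square roots of its eigenvalues `λ_k`. The `j`-th unnormalised
conditional state is then `R_j R_jᴴ`, with `R_j` the `j`-th block of rows of `R`; an ensemble's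
von Neumann entropy is at most the Shannon entropy of its weights, so with `η x = -x log x`,
`s_jk = ‖(R_j)_{·k}‖²` and `p_j = Σ_k s_jk` we get `p_j H(ρ_{B|j}) ≤ Σ_k η(s_jk) - η(p_j)`.
Summing over `j` and using subadditivity of Shannon entropy for the joint weights `s`, whose
`k`-marginal is `λ`, gives `Σ_j p_j H(ρ_{B|j}) ≤ H(λ) = H(ρ_{AB})`. Hence the minimum over
measurements is at most `H(ρ_{AB})`, which is `D(A,B) ≤ H(ρ_A)`.
-/

open Real (negMulLog)
open Complex (normSq)

lemma div_self_mul_negMulLog (x : ℝ) : x / x * negMulLog x = negMulLog x := by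
  rcases eq_or_ne x 0 with rfl | hx
  · simp
  · rw [div_self hx, one_mul]

lemma sum_mul_negMulLog_le_negMulLog_sum {ι : Type*} [Fintype ι] {w x : ι → ℝ}
    (hw : ∀ i, 0 ≤ w i) (hw1 : ∑ i, w i ≤ 1) (hx : ∀ i, 0 ≤ x i) :
    ∑ i, w i * negMulLog (x i) ≤ negMulLog (∑ i, w i * x i) := by
  -- the missing weight `1 - ∑ w` is put on the point `0`, where `negMulLog` vanishes
  have h := Real.concaveOn_negMulLog.map_add_sum_le (t := Finset.univ)
    (w := w) (p := x) (v := 1 - ∑ i, w i) (q := 0)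
    (fun i _ => hw i) (by ring) (fun i _ => hx i) (by linarith) (Set.mem_Ici.2 le_rfl)
  simpa [smul_eq_mul] using h

lemma sum_sum_negMulLog_le_marginals {ι κ : Type*} [Fintype ι] [Fintype κ] {s : ι → κ → ℝ}
    (hs : ∀ j k, 0 ≤ s j k) (hs1 : ∑ j, ∑ k, s j k ≤ 1) :
    ∑ j, ∑ k, negMulLog (s j k) ≤ ∑ j, negMulLog (∑ k, s j k) + ∑ k, negMulLog (∑ j, s j k) := by
  set m : κ → ℝ := fun k => ∑ j, s j k
  have hm0 : ∀ k, 0 ≤ m k := fun k => Finset.sum_nonneg fun j _ => hs j k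
  have hsplit : ∀ j k, s j k = m k * (s j k / m k) := by
    intro j k
    rcases eq_or_ne (m k) 0 with h | h
    · simp [h, (Finset.sum_eq_zero_iff_of_nonneg fun j _ => hs j k).1 h j (Finset.mem_univ j)]
    · field_simp
  have hjensen : ∀ j, ∑ k, m k * negMulLog (s j k / m k) ≤ negMulLog (∑ k, s j k) := by
    intro j
    have h := sum_mul_negMulLog_le_negMulLog_sum hm0 (by rwa [Finset.sum_comm])
      (fun k => div_nonneg (hs j k) (hm0 k))
    rwa [← Finset.sum_congr rfl fun k _ => hsplit j k] at h
  calc ∑ j, ∑ k, negMulLog (s j k)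
      = ∑ k, negMulLog (m k) + ∑ j, ∑ k, m k * negMulLog (s j k / m k) := by
        simp_rw [fun j k => congrArg negMulLog (hsplit j k), Real.negMulLog_mul,
          Finset.sum_add_distrib]
        rw [Finset.sum_comm]
        congr 1
        refine Finset.sum_congr rfl fun k _ => ?_
        rw [← Finset.sum_mul, ← Finset.sum_div, div_self_mul_negMulLog]
    _ ≤ _ := by linarith [Finset.sum_le_sum fun j (_ : j ∈ Finset.univ) => hjensen j]

lemma mul_sum_negMulLog_inv_mul {ι : Type*} [Fintype ι] {p : ℝ} (hp : p ≠ 0) {s : ι → ℝ}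
    (hs : ∑ k, s k = p) :
    p * ∑ k, negMulLog (p⁻¹ * s k) = ∑ k, negMulLog (s k) - negMulLog p := by
  simp_rw [Real.negMulLog_mul, Finset.sum_add_distrib, ← Finset.mul_sum, ← Finset.sum_mul, hs,
    Real.negMulLog, Real.log_inv]
  field_simp
  ring

lemma sum_normSq_div_le_one {n ι : Type*} [Fintype n] [Fintype ι] [DecidableEq n]
    {G : Matrix n ι ℂ} {μ : n → ℝ} (hG : G * Gᴴ = diagonal fun l => (μ l : ℂ)) (i : ι) :
    ∑ l, normSq (G l i) / μ l ≤ 1 := by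
  set t := ∑ l, normSq (G l i) / μ l
  -- Cauchy–Schwarz for `z := Gᴴ y` with `y l = G l i / μ l`: `z i = t` and `‖z‖² = t`
  set z := Gᴴ *ᵥ fun l => G l i / μ l
  have hzi : z i = t := by
    simp only [z, t, mulVec, dotProduct, conjTranspose_apply, Complex.ofReal_sum,
      Complex.ofReal_div, Complex.normSq_eq_conj_mul_self]
    exact Finset.sum_congr rfl fun l _ => by rw [RCLike.star_def, mul_div_assoc]
  have hzz : ∑ m, normSq (z m) = t := by
    have h : star z ⬝ᵥ z = star (fun l => G l i / μ l) ⬝ᵥ (G * Gᴴ) *ᵥ fun l => G l i / μ l := by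
      rw [star_mulVec, conjTranspose_conjTranspose, ← dotProduct_mulVec, mulVec_mulVec]
    rw [hG] at h
    apply Complex.ofReal_injective
    simp only [dotProduct, mulVec_diagonal, Pi.star_apply, RCLike.star_def] at h
    have hz : ∑ m, ((normSq (z m) : ℝ) : ℂ) = ∑ m, (starRingEnd ℂ) (z m) * z m :=
      Finset.sum_congr rfl fun m _ => Complex.normSq_eq_conj_mul_self
    rw [Complex.ofReal_sum, hz, h]
    simp only [t]
    push_cast
    refine Finset.sum_congr rfl fun l _ => ?_
    rcases eq_or_ne (μ l) 0 with h0 | h0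
    · simp [h0]
    · rw [Complex.normSq_eq_conj_mul_self, map_div₀, Complex.conj_ofReal]
      field_simp
  have ht0 : 0 ≤ t := hzz ▸ Finset.sum_nonneg fun m _ => Complex.normSq_nonneg (z m)
  have ht : t * t ≤ t := by
    rw [← Complex.normSq_ofReal, ← hzi, ← hzz]
    exact Finset.single_le_sum (fun m _ => Complex.normSq_nonneg (z m)) (Finset.mem_univ i)
  nlinarith

lemma vnEntropy_of_isHermitian {n : Type*} [Fintype n] [DecidableEq n] {A : Matrix n n ℂ}
    (hA : A.IsHermitian) : vnEntropy A = ∑ i, negMulLog (hA.eigenvalues i) :=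
  dif_pos hA

lemma Matrix.IsHermitian.sum_eigenvalues_eq_one {n : Type*} [Fintype n] [DecidableEq n]
    {A : Matrix n n ℂ} (hA : A.IsHermitian) (htr : A.trace = 1) : ∑ i, hA.eigenvalues i = 1 := by
  simpa [htr] using (congrArg Complex.re hA.trace_eq_sum_eigenvalues).symm

lemma vnEntropy_nonneg {n : Type*} [Fintype n] [DecidableEq n] {A : Matrix n n ℂ}
    (hA : A.PosSemidef) (htr : A.trace = 1) : 0 ≤ vnEntropy A := by
  rw [vnEntropy_of_isHermitian hA.1]
  refine Finset.sum_nonneg fun i _ => Real.negMulLog_nonneg (hA.eigenvalues_nonneg i) ?_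
  rw [← hA.1.sum_eigenvalues_eq_one htr]
  exact Finset.single_le_sum (fun k _ => hA.eigenvalues_nonneg k) (Finset.mem_univ i)

lemma vnEntropy_mul_conjTranspose_le {n ι : Type*} [Fintype n] [DecidableEq n] [Fintype ι]
    (W : Matrix n ι ℂ) :
    vnEntropy (W * Wᴴ) ≤ ∑ i, negMulLog (∑ x, normSq (W x i)) := by
  have hH := isHermitian_mul_conjTranspose_self W
  set U := hH.eigenvectorUnitary
  set μ := hH.eigenvalues
  set G := star (U : Matrix n n ℂ) * W
  have hG : G * Gᴴ = diagonal fun l => (μ l : ℂ) := by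
    have h := hH.conjStarAlgAut_star_eigenvectorUnitary
    rw [Unitary.conjStarAlgAut_star_apply] at h
    rw [conjTranspose_mul, ← star_eq_conjTranspose, star_star]
    simp only [G, Matrix.mul_assoc] at h ⊢
    exact h
  have hcol : ∀ l, ∑ i, normSq (G l i) = μ l := by
    intro l
    have h := congrFun (congrFun hG l) l
    rw [mul_apply, diagonal_apply_eq] at h
    simp only [conjTranspose_apply, RCLike.star_def, Complex.mul_conj] at h
    exact_mod_cast h
  have hμ : ∀ l, 0 ≤ μ l := fun l => hcol l ▸ Finset.sum_nonneg fun _ _ => Complex.normSq_nonneg _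
  have hrow : ∀ i, ∑ l, normSq (G l i) = ∑ x, normSq (W x i) := by
    intro i
    have hGG : Gᴴ * G = Wᴴ * W := by
      have hUU : (U : Matrix n n ℂ) * (U : Matrix n n ℂ)ᴴ = 1 := Unitary.coe_mul_star_self U
      simp only [G, star_eq_conjTranspose, conjTranspose_mul, conjTranspose_conjTranspose]
      rw [Matrix.mul_assoc, ← Matrix.mul_assoc (U : Matrix n n ℂ), hUU, Matrix.one_mul]
    have h := congrFun (congrFun hGG i) i
    simp only [mul_apply, conjTranspose_apply, RCLike.star_def,
      ← Complex.normSq_eq_conj_mul_self] at h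
    exact_mod_cast h
  calc vnEntropy (W * Wᴴ) = ∑ l, negMulLog (μ l) := vnEntropy_of_isHermitian hH
    _ = ∑ i, ∑ l, normSq (G l i) / μ l * negMulLog (μ l) := by
        rw [Finset.sum_comm]
        refine Finset.sum_congr rfl fun l _ => ?_
        rw [← Finset.sum_mul, ← Finset.sum_div, hcol, div_self_mul_negMulLog]
    _ ≤ ∑ i, negMulLog (∑ l, normSq (G l i) / μ l * μ l) :=
        Finset.sum_le_sum fun i _ => sum_mul_negMulLog_le_negMulLog_sum
          (fun l => div_nonneg (Complex.normSq_nonneg _) (hμ l)) (sum_normSq_div_le_one hG i) hμ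
    _ = ∑ i, negMulLog (∑ x, normSq (W x i)) := by
        refine Finset.sum_congr rfl fun i _ => congrArg negMulLog ?_
        rw [← hrow]
        refine Finset.sum_congr rfl fun l _ => ?_
        rcases eq_or_ne (μ l) 0 with h0 | h0
        · rw [← hcol, Finset.sum_eq_zero_iff_of_nonneg fun _ _ => Complex.normSq_nonneg _] at h0
          simp [h0 i (Finset.mem_univ i)]
        · exact div_mul_cancel₀ _ h0

lemma vnEntropy_smul_mul_conjTranspose_le {n ι : Type*} [Fintype n] [DecidableEq n] [Fintype ι]
    {c : ℝ} (hc : 0 ≤ c) (W : Matrix n ι ℂ) :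
    vnEntropy (c • (W * Wᴴ)) ≤ ∑ i, negMulLog (c * ∑ x, normSq (W x i)) := by
  have h : c • (W * Wᴴ) = ((√c : ℂ) • W) * ((√c : ℂ) • W)ᴴ := by
    rw [conjTranspose_smul, Matrix.smul_mul, Matrix.mul_smul, smul_smul, RCLike.star_def,
      Complex.conj_ofReal, ← Complex.ofReal_mul, Real.mul_self_sqrt hc, Complex.coe_smul]
  rw [h]
  refine (vnEntropy_mul_conjTranspose_le _).trans_eq ?_
  simp only [Matrix.smul_apply, smul_eq_mul, Complex.normSq_mul, Complex.normSq_ofReal,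
    Real.mul_self_sqrt hc, Finset.mul_sum]

lemma Matrix.PosSemidef.exists_eq_mul_conjTranspose_sum_normSq_eq_eigenvalues
    {n : Type*} [Fintype n] [DecidableEq n] {A : Matrix n n ℂ} (hA : A.PosSemidef) :
    ∃ R : Matrix n n ℂ, A = R * Rᴴ ∧ ∀ k, ∑ x, normSq (R x k) = hA.1.eigenvalues k := by
  set U := hA.1.eigenvectorUnitary
  set μ := hA.1.eigenvalues
  have hμ : ∀ k, 0 ≤ μ k := hA.eigenvalues_nonneg
  refine ⟨U * diagonal fun k => (√(μ k) : ℂ), ?_, fun k => ?_⟩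
  · have hdiag : (diagonal fun k => (√(μ k) : ℂ)) * (diagonal fun k => (√(μ k) : ℂ))ᴴ
        = diagonal (RCLike.ofReal ∘ μ) := by
      rw [diagonal_conjTranspose, diagonal_mul_diagonal]
      congr 1
      ext k
      simp [← Complex.ofReal_mul, Real.mul_self_sqrt (hμ k)]
    rw [conjTranspose_mul, ← Matrix.mul_assoc, Matrix.mul_assoc (U : Matrix n n ℂ), hdiag]
    conv_lhs => rw [hA.1.spectral_theorem, Unitary.conjStarAlgAut_apply, star_eq_conjTranspose]
  · have h := congrFun (congrFun (Unitary.coe_star_mul_self U) k) k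
    simp only [mul_apply, star_apply, RCLike.star_def, one_apply_eq,
      ← Complex.normSq_eq_conj_mul_self] at h
    have h' : ∑ x, normSq ((U : Matrix n n ℂ) x k) = 1 := by exact_mod_cast h
    simp only [mul_diagonal, Complex.normSq_mul, Complex.normSq_ofReal, ← Finset.sum_mul]
    rw [h', Real.mul_self_sqrt (hμ k), one_mul]

def ProjMeas.standard (α : Type*) [Fintype α] [DecidableEq α] : ProjMeas α where
  P j := single j j 1
  herm j := by simp [IsHermitian]
  idem j := by rw [single_mul_single_same, one_mul]
  orth j k hjk := single_mul_single_of_ne _ _ _ _ hjk _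
  comp := sum_single_one

section Discord

variable {α β : Type*} [Fintype α] [Fintype β] [DecidableEq α] [DecidableEq β]

lemma measProb_single (ρ : Matrix (α × β) (α × β) ℂ) (j : α) :
    measProb ρ (single j j 1) = (∑ b, ρ (j, b) (j, b)).re := by
  simp [measProb, trace, mul_apply, single_apply, one_apply, Fintype.sum_prod_type, ite_and]

lemma postState_single (ρ : Matrix (α × β) (α × β) ℂ) (j : α) :
    postState ρ (single j j 1)
      = (measProb ρ (single j j 1))⁻¹ • ρ.submatrix (fun b => (j, b)) (fun b => (j, b)) := by
  rw [postState]
  congr 1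
  ext b b'
  simp [ptrFst, mul_apply, single_apply, one_apply, Fintype.sum_prod_type, ite_and]

lemma measProb_mul_vnEntropy_postState_single_le {κ : Type*} [Fintype κ]
    (R : Matrix (α × β) κ ℂ) (j : α) :
    measProb (R * Rᴴ) (single j j 1) * vnEntropy (postState (R * Rᴴ) (single j j 1))
      ≤ ∑ k, negMulLog (∑ b, normSq (R (j, b) k))
        - negMulLog (∑ k, ∑ b, normSq (R (j, b) k)) := by
  set s : κ → ℝ := fun k => ∑ b, normSq (R (j, b) k)
  set p := measProb (R * Rᴴ) (single j j 1)
  change _ ≤ ∑ k, negMulLog (s k) - negMulLog (∑ k, s k)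
  have hp : p = ∑ k, s k := by
    simp only [p, s, measProb_single, mul_apply, conjTranspose_apply, RCLike.star_def,
      Complex.mul_conj, Complex.re_sum, Complex.ofReal_re]
    exact Finset.sum_comm
  have hs : ∀ k, 0 ≤ s k := fun k => Finset.sum_nonneg fun b _ => Complex.normSq_nonneg _
  rcases (hp ▸ Finset.sum_nonneg fun k _ => hs k : 0 ≤ p).eq_or_lt with hp0 | hp0
  · have hs0 : ∀ k, s k = 0 := fun k =>
      (Finset.sum_eq_zero_iff_of_nonneg fun k _ => hs k).1 (hp ▸ hp0.symm) k (Finset.mem_univ k)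
    simp [← hp0, hs0]
  have hblock : (R * Rᴴ).submatrix (fun b => (j, b)) (fun b => (j, b))
      = R.submatrix (fun b => (j, b)) id * (R.submatrix (fun b => (j, b)) id)ᴴ := by
    ext b b'
    simp [mul_apply]
  calc p * vnEntropy (postState (R * Rᴴ) (single j j 1))
      ≤ p * ∑ k, negMulLog (p⁻¹ * s k) := by
        rw [postState_single, hblock]
        exact mul_le_mul_of_nonneg_left
          (vnEntropy_smul_mul_conjTranspose_le (inv_nonneg.2 hp0.le) _) hp0.le
    _ = ∑ k, negMulLog (s k) - negMulLog (∑ k, s k) := by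
        rw [mul_sum_negMulLog_inv_mul hp0.ne' hp.symm, hp]

lemma sum_measProb_mul_vnEntropy_postState_standard_le {ρ : Matrix (α × β) (α × β) ℂ}
    (hρ : ρ.PosSemidef) (htr : ρ.trace = 1) :
    ∑ j, measProb ρ ((ProjMeas.standard α).P j) *
        vnEntropy (postState ρ ((ProjMeas.standard α).P j)) ≤ vnEntropy ρ := by
  obtain ⟨R, hR, hcol⟩ := hρ.exists_eq_mul_conjTranspose_sum_normSq_eq_eigenvalues
  set s : α → α × β → ℝ := fun j k => ∑ b, normSq (R (j, b) k)
  have hmarg : ∀ k, ∑ j, s j k = hρ.1.eigenvalues k := fun k =>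
    (Fintype.sum_prod_type _).symm.trans (hcol k)
  have htot : ∑ j, ∑ k, s j k = 1 := by
    rw [Finset.sum_comm, Finset.sum_congr rfl fun k _ => hmarg k]
    exact hρ.1.sum_eigenvalues_eq_one htr
  calc ∑ j, measProb ρ (single j j 1) * vnEntropy (postState ρ (single j j 1))
      ≤ ∑ j, (∑ k, negMulLog (s j k) - negMulLog (∑ k, s j k)) := by
        rw [hR]
        exact Finset.sum_le_sum fun j _ => measProb_mul_vnEntropy_postState_single_le R j
    _ ≤ ∑ k, negMulLog (∑ j, s j k) := by
        have := sum_sum_negMulLog_le_marginals (fun j k => Finset.sum_nonneg fun b _ =>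
          Complex.normSq_nonneg (R (j, b) k)) htot.le
        rw [Finset.sum_sub_distrib]
        linarith
    _ = vnEntropy ρ := by
        simp only [hmarg, vnEntropy_of_isHermitian hρ.1]

lemma condEntA_le_vnEntropy {ρ : Matrix (α × β) (α × β) ℂ} (hρ : ρ.PosSemidef)
    (htr : ρ.trace = 1) : condEntA ρ ≤ vnEntropy ρ := by
  by_cases hbdd : BddBelow (Set.range fun m : ProjMeas α =>
      ∑ j, measProb ρ (m.P j) * vnEntropy (postState ρ (m.P j)))
  · exact (ciInf_le hbdd _).trans (sum_measProb_mul_vnEntropy_postState_standard_le hρ htr)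
  · -- an infimum of reals that is unbounded below is `0` by convention
    rw [condEntA, Real.iInf_of_not_bddBelow hbdd]
    exact vnEntropy_nonneg hρ htr

end Discord

/-- Quantum discord is bounded above by the entropy of the measured subsystem:
`D(A,B) ≤ H(ρ_A)`. -/
theorem stmt_5 {α β : Type*} [Fintype α] [Fintype β] [DecidableEq α] [DecidableEq β]
    (ρ : Matrix (α × β) (α × β) ℂ) (hρ : ρ.PosSemidef) (htr : ρ.trace = 1) :
    discordA ρ ≤ vnEntropy (ptrSnd ρ) := by
  have := condEntA_le_vnEntropy hρ htr
  rw [discordA]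
  linarith
end

section
/- Maximizing Σ_k |λ_k| over real numbers λ_1,...,λ_{2N} subject to Σ_k λ_k = 1 and Σ_k λ_k² = (1+α²)/(2N) yields the upper bound √(1+α²), attained (with t treated as continuous) when t = N(1 − 1/√(1+α²)) of the eigenvalues are equal and negative and the remaining 2N−t are equal and nonnegative. -/
/-!
Cauchy–Schwarz gives `(Σ |λ_k|)² ≤ 2N · Σ λ_k² = 1 + α²`. With `s = √(1+α²)` and
`t = N(1 − 1/s)` one has `t(2N − t) = N²(1 − 1/s²) = (Nα/s)²`, so the value at that `t` is
`(N/s + Nα²/s)/N = s²/s = s`.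
-/

open Finset

theorem sum_abs_le_sqrt_card_mul_sum_sq {ι : Type*} (s : Finset ι) (f : ι → ℝ) :
    ∑ i ∈ s, |f i| ≤ √(#s * ∑ i ∈ s, f i ^ 2) := by
  apply Real.le_sqrt_of_sq_le
  simpa only [sq_abs] using sq_sum_le_card_mul_sum_sq (s := s) (f := fun i => |f i|)

theorem sqrt_degeneracy_mul_complement {N a : ℝ} (hN : 0 ≤ N) (ha : 0 ≤ a) :
    √((N * (1 - 1 / √(1 + a ^ 2))) * (2 * N - N * (1 - 1 / √(1 + a ^ 2)))) =
      N * a / √(1 + a ^ 2) := by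
  have hs : √(1 + a ^ 2) ^ 2 = 1 + a ^ 2 := Real.sq_sqrt (by positivity)
  have hs_pos : 0 < √(1 + a ^ 2) := Real.sqrt_pos.mpr (by positivity)
  rw [← Real.sqrt_sq (by positivity : 0 ≤ N * a / √(1 + a ^ 2))]
  congr 1
  field_simp
  linear_combination N ^ 2 * hs

/-- Maximizing `Σ_k |λ_k|` over `λ : Fin (2N) → ℝ` subject to `Σ λ_k = 1` and
`Σ λ_k² = (1+α²)/(2N)` yields the upper bound `√(1+α²)`; with the degeneracy parameter
`t` treated as continuous, the value `t = N(1 − 1/√(1+α²))` attains it: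
`(N − t + α√(t(2N−t)))/N = √(1+α²)`. -/
theorem stmt_12 (N : ℕ) (hN : 0 < N) (a : ℝ) (ha : 0 ≤ a) :
    (∀ lam : Fin (2 * N) → ℝ,
        ∑ k, lam k = 1 →
        ∑ k, lam k ^ 2 = (1 + a ^ 2) / (2 * N) →
        ∑ k, |lam k| ≤ Real.sqrt (1 + a ^ 2)) ∧
    ((N : ℝ) - N * (1 - 1 / Real.sqrt (1 + a ^ 2)) +
        a * Real.sqrt ((N * (1 - 1 / Real.sqrt (1 + a ^ 2))) *
          (2 * N - N * (1 - 1 / Real.sqrt (1 + a ^ 2))))) / N =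
      Real.sqrt (1 + a ^ 2) := by
  have hN' : (0 : ℝ) < N := by exact_mod_cast hN
  constructor
  · intro lam _ h_sq
    calc ∑ k, |lam k| ≤ √(#(univ : Finset (Fin (2 * N))) * ∑ k, lam k ^ 2) :=
          sum_abs_le_sqrt_card_mul_sum_sq _ _
      _ = √(1 + a ^ 2) := by
          rw [h_sq, card_univ, Fintype.card_fin]
          congr 1
          push_cast
          field_simp
  · have hs : √(1 + a ^ 2) ^ 2 = 1 + a ^ 2 := Real.sq_sqrt (by positivity)
    have hs_pos : 0 < √(1 + a ^ 2) := Real.sqrt_pos.mpr (by positivity)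
    rw [sqrt_degeneracy_mul_complement hN'.le ha]
    field_simp
    linear_combination -hs
end

section
/- For every n-qubit unitary U and every polarization 0 ≤ α ≤ 1 and every bipartite division of the n+1 qubits, the multiplicative negativity of the DQC1 output state ρ_{n+1}(α) is at most √(1+α²); in particular for α = 1 it is at most √2, independent of n. -/
open Matrix Kronecker

/-- Trace norm of a Hermitian matrix: sum of the absolute values of its eigenvalues. -/
noncomputable def traceNorm {n : Type*} [Fintype n] [DecidableEq n]
    (A : Matrix n n ℂ) : ℝ :=
  if h : A.IsHermitian then ∑ i, |h.eigenvalues i| else 0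

/-- The DQC1 output state on the special qubit together with `n` qubits split as `A × B`:
`ρ = (1/2N)(I + α(|0⟩⟨1| ⊗ U† + |1⟩⟨0| ⊗ U))`, `N = dim(A × B)`. -/
noncomputable def dqc1State {A B : Type*} [Fintype A] [Fintype B] [DecidableEq A]
    [DecidableEq B] (a : ℝ) (U : Matrix (A × B) (A × B) ℂ) :
    Matrix (Fin 2 × (A × B)) (Fin 2 × (A × B)) ℂ :=
  (2 * (Fintype.card (A × B) : ℂ))⁻¹ •
    (1 + (a : ℂ) • (Matrix.single 0 1 1 ⊗ₖ Uᴴ + Matrix.single 1 0 1 ⊗ₖ U))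

/-- Partial transpose of the DQC1 state over the part `B` (the part not containing the
special qubit). -/
def ptB {A B : Type*} (ρ : Matrix (Fin 2 × (A × B)) (Fin 2 × (A × B)) ℂ) :
    Matrix (Fin 2 × (A × B)) (Fin 2 × (A × B)) ℂ :=
  Matrix.of fun p q => ρ (p.1, (p.2.1, q.2.2)) (q.1, (q.2.1, p.2.2))

/-- Partial transpose of an operator on `A × B` over the `B` factor. -/
def ptU {A B : Type*} (U : Matrix (A × B) (A × B) ℂ) : Matrix (A × B) (A × B) ℂ :=
  Matrix.of fun p q => U (p.1, q.2) (q.1, p.2)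

/-!
The partial transpose `ρ̆` of the DQC1 state is Hermitian, and since it merely permutes the index
pairs `(p, q)` in `tr (ρ * ρ) = ∑ ρ p q * ρ q p`, its purity is that of `ρ`, namely
`tr ρ̆² = tr ρ² = (1 + α²)/(2N)` (the coupling `V = |0⟩⟨1| ⊗ U† + |1⟩⟨0| ⊗ U` is traceless with
`V² = 1`). Cauchy–Schwarz on the `2N` eigenvalues of `ρ̆` then gives
`‖ρ̆‖₁ ≤ √(2N · tr ρ̆²) = √(1 + α²)`.
-/

lemma Matrix.IsHermitian.trace_mul_self {𝕜 n : Type*} [RCLike 𝕜] [Fintype n] [DecidableEq n]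
    {M : Matrix n n 𝕜} (hM : M.IsHermitian) :
    (M * M).trace = ((∑ i, hM.eigenvalues i ^ 2 : ℝ) : 𝕜) := by
  conv_lhs => rw [hM.spectral_theorem, ← map_mul, Unitary.conjStarAlgAut_apply, trace_mul_cycle,
    Unitary.coe_star_mul_self, one_mul, diagonal_mul_diagonal, trace_diagonal]
  simp [sq]

lemma traceNorm_le_sqrt_card_mul_trace_mul_self {n : Type*} [Fintype n] [DecidableEq n]
    {M : Matrix n n ℂ} (hM : M.IsHermitian) :
    traceNorm M ≤ √(Fintype.card n * (M * M).trace.re) := by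
  rw [traceNorm, dif_pos hM, hM.trace_mul_self, ← RCLike.re_to_complex, RCLike.ofReal_re]
  apply Real.le_sqrt_of_sq_le
  simpa [sq_abs] using
    sq_sum_le_card_mul_sum_sq (s := Finset.univ) (f := fun i => |hM.eigenvalues i|)

section PartialTranspose

variable {A B : Type*}

lemma Matrix.IsHermitian.ptB {ρ : Matrix (Fin 2 × (A × B)) (Fin 2 × (A × B)) ℂ}
    (hρ : ρ.IsHermitian) : (ptB ρ).IsHermitian := by
  ext p q
  exact hρ.apply _ _

lemma trace_ptB_mul_self [Fintype A] [Fintype B]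
    (ρ : Matrix (Fin 2 × (A × B)) (Fin 2 × (A × B)) ℂ) :
    (ptB ρ * ptB ρ).trace = (ρ * ρ).trace := by
  let swapB : (Fin 2 × (A × B)) × (Fin 2 × (A × B)) → (Fin 2 × (A × B)) × (Fin 2 × (A × B)) :=
    fun ⟨⟨i, a, b⟩, ⟨j, c, d⟩⟩ => ⟨⟨i, a, d⟩, ⟨j, c, b⟩⟩
  have hswap : swapB.Involutive := fun _ => rfl
  simp only [trace, diag, mul_apply, ← Finset.sum_product', Finset.univ_product_univ]
  exact Fintype.sum_bijective swapB hswap.bijective _ _ fun _ => rfl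

end PartialTranspose

section DQC1

variable {A B : Type*}

def dqc1Coupling (U : Matrix (A × B) (A × B) ℂ) :
    Matrix (Fin 2 × (A × B)) (Fin 2 × (A × B)) ℂ :=
  single 0 1 1 ⊗ₖ Uᴴ + single 1 0 1 ⊗ₖ U

lemma dqc1State_eq_smul [Fintype A] [Fintype B] [DecidableEq A] [DecidableEq B] (a : ℝ)
    (U : Matrix (A × B) (A × B) ℂ) :
    dqc1State a U = (2 * (Fintype.card (A × B) : ℂ))⁻¹ • (1 + (a : ℂ) • dqc1Coupling U) :=
  rfl

lemma isHermitian_dqc1Coupling (U : Matrix (A × B) (A × B) ℂ) : (dqc1Coupling U).IsHermitian := by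
  simp only [IsHermitian, dqc1Coupling, conjTranspose_add, conjTranspose_kronecker,
    conjTranspose_single, star_one, conjTranspose_conjTranspose]
  abel

lemma trace_dqc1Coupling [Fintype A] [Fintype B] (U : Matrix (A × B) (A × B) ℂ) :
    (dqc1Coupling U).trace = 0 := by
  simp [dqc1Coupling, trace_kronecker]

lemma dqc1Coupling_mul_self [Fintype A] [Fintype B] [DecidableEq A] [DecidableEq B]
    {U : Matrix (A × B) (A × B) ℂ} (hU : Uᴴ * U = 1) :
    dqc1Coupling U * dqc1Coupling U = 1 := by
  have hU' : U * Uᴴ = 1 := mul_eq_one_comm.mp hU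
  have hsum : (single 1 1 1 + single 0 0 1 : Matrix (Fin 2) (Fin 2) ℂ) = 1 := by
    ext i j; fin_cases i <;> fin_cases j <;> simp
  simp only [dqc1Coupling, add_mul, mul_add, ← mul_kronecker_mul, hU, hU', single_mul_single_same,
    mul_one, single_mul_single_of_ne, ne_eq, zero_ne_one, one_ne_zero, not_false_eq_true,
    zero_kronecker, zero_add, add_zero]
  rw [← add_kronecker, hsum, one_kronecker_one]

lemma isHermitian_dqc1State [Fintype A] [Fintype B] [DecidableEq A] [DecidableEq B] (a : ℝ)
    (U : Matrix (A × B) (A × B) ℂ) :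
    (dqc1State a U).IsHermitian := by
  rw [dqc1State_eq_smul]
  exact (isHermitian_one.add ((isHermitian_dqc1Coupling U).smul (by simp [IsSelfAdjoint]))).smul
    (by simp [IsSelfAdjoint])

lemma trace_dqc1State_mul_self [Fintype A] [Fintype B] [DecidableEq A] [DecidableEq B]
    [Nonempty A] [Nonempty B] (a : ℝ) {U : Matrix (A × B) (A × B) ℂ} (hU : Uᴴ * U = 1) :
    (dqc1State a U * dqc1State a U).trace = ((1 + a ^ 2) / (2 * Fintype.card (A × B)) : ℝ) := by
  have hsq : (1 + (a : ℂ) • dqc1Coupling U) * (1 + (a : ℂ) • dqc1Coupling U) =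
      (1 + (a : ℂ) ^ 2) • 1 + (2 * a : ℂ) • dqc1Coupling U := by
    simp only [add_mul, mul_add, one_mul, mul_one, smul_mul_smul, dqc1Coupling_mul_self hU]
    module
  have hN : (Fintype.card (A × B) : ℂ) ≠ 0 := Nat.cast_ne_zero.mpr Fintype.card_ne_zero
  rw [dqc1State_eq_smul, smul_mul_smul, hsq, trace_smul, trace_add, trace_smul, trace_smul,
    trace_one, trace_dqc1Coupling, smul_zero, add_zero, Fintype.card_prod (Fin 2),
    Fintype.card_fin, smul_eq_mul, smul_eq_mul]
  push_cast
  field_simp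

end DQC1

theorem stmt_13_general {A B : Type*} [Fintype A] [Fintype B] [DecidableEq A] [DecidableEq B]
    [Nonempty A] [Nonempty B]
    (a : ℝ)
    (U : Matrix (A × B) (A × B) ℂ) (hU : Uᴴ * U = 1) :
    traceNorm (ptB (dqc1State a U)) ≤ Real.sqrt (1 + a ^ 2) := by
  have hN : (Fintype.card (A × B) : ℝ) ≠ 0 := Nat.cast_ne_zero.mpr Fintype.card_ne_zero
  calc traceNorm (ptB (dqc1State a U))
      ≤ √(Fintype.card (Fin 2 × (A × B)) *
          (ptB (dqc1State a U) * ptB (dqc1State a U)).trace.re) :=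
        traceNorm_le_sqrt_card_mul_trace_mul_self (isHermitian_dqc1State a U).ptB
    _ = √(1 + a ^ 2) := by
        rw [trace_ptB_mul_self, trace_dqc1State_mul_self a hU, Complex.ofReal_re,
          Fintype.card_prod (Fin 2), Fintype.card_fin]
        push_cast
        field_simp

/-- For every `n`-qubit unitary `U`, every polarization `0 ≤ α ≤ 1` and every bipartite
division of the `n+1` qubits, the multiplicative negativity of the DQC1 output state is
at most `√(1+α²)` (so at most `√2` for `α = 1`), independent of `n`. -/
theorem stmt_13 {A B : Type*} [Fintype A] [Fintype B] [DecidableEq A] [DecidableEq B]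
    [Nonempty A] [Nonempty B]
    (a : ℝ) (h0 : 0 ≤ a) (h1 : a ≤ 1)
    (U : Matrix (A × B) (A × B) ℂ) (hU : Uᴴ * U = 1) :
    traceNorm (ptB (dqc1State a U)) ≤ Real.sqrt (1 + a ^ 2) :=
  stmt_13_general a U hU
end

section
/- For the three-qubit DQC1 state built from the specific two-qubit unitary U_2 with blocks A_1 = |1⟩⟨1|, B_1 = |0⟩⟨0|, C_1 = |0⟩⟨1|, D_1 = |1⟩⟨0|, the spectrum of the partial transpose ρ̆_3(α) is (1/8)(1+2α, 1, 1, 1, 1, 1, 1, 1−2α), so the multiplicative negativity is 1 for α ≤ 1/2 and (2α+3)/4 for α ≥ 1/2 (equal to 5/4 at α = 1). -/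
/-!
The partial transpose of `dqc1State a U` is `(1/2N)(1 + α X ⊗ ptU U)` as soon as `ptU U` is
Hermitian, and for `U₂` the operator `ptU U₂` is the rank-one matrix `|ψ⟩⟨ψ|` of the
unnormalised Bell vector `ψ = |01⟩ + |10⟩`. Conjugating by `H ⊗ (Bell basis)` diagonalises
`X ⊗ |ψ⟩⟨ψ|` with eigenvalues `2`, `-2` and six times `0`, which gives the characteristic
polynomial of `ρ̆₃(α)`. Its roots are the eigenvalues of the Hermitian matrix `ρ̆₃(α)`; of
these only `(1 - 2α)/8` can be negative, which yields the trace norm.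
-/
open Matrix Kronecker

/-- The specific two-qubit unitary `U₂` with blocks `A₁ = |1⟩⟨1|`, `B₁ = |0⟩⟨0|`,
`C₁ = |0⟩⟨1|`, `D₁ = |1⟩⟨0|`: `U₂ = [[A₁, C₁],[D₁, B₁]]`. -/
noncomputable def U2 : Matrix (Fin 2 × Fin 2) (Fin 2 × Fin 2) ℂ :=
  Matrix.single 0 0 1 ⊗ₖ Matrix.single 1 1 1 +
  Matrix.single 0 1 1 ⊗ₖ Matrix.single 0 1 1 +
  Matrix.single 1 0 1 ⊗ₖ Matrix.single 1 0 1 +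
  Matrix.single 1 1 1 ⊗ₖ Matrix.single 0 0 1


open Polynomial

namespace Matrix

variable {R n : Type*} [CommRing R] [DecidableEq n]

theorem smul_one_add_smul_diagonal (c b : R) (d : n → R) :
    c • (1 + b • diagonal d) = diagonal fun i => c * (1 + b * d i) := by
  ext i j
  rcases eq_or_ne i j with rfl | hij
  · simp
  · simp [hij]

variable [Fintype n]

theorem charpoly_mul_mul_of_mul_eq_one {P Q : Matrix n n R} (hPQ : P * Q = 1)
    (A : Matrix n n R) : (P * A * Q).charpoly = A.charpoly := by
  rw [Matrix.mul_assoc, charpoly_mul_comm, Matrix.mul_assoc, mul_eq_one_comm.mp hPQ,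
    Matrix.mul_one]

theorem charpoly_smul_one_add_smul_mul_mul {P Q : Matrix n n R} (hPQ : P * Q = 1) (c b : R)
    (D : Matrix n n R) : (c • (1 + b • (P * D * Q))).charpoly = (c • (1 + b • D)).charpoly := by
  rw [← charpoly_mul_mul_of_mul_eq_one hPQ (c • (1 + b • D))]
  congr 1
  rw [Matrix.mul_smul, Matrix.smul_mul, Matrix.mul_add, Matrix.add_mul, Matrix.mul_one, hPQ,
    Matrix.mul_smul, Matrix.smul_mul]

end Matrix

theorem Fintype.exists_equiv_of_map_univ_eq {α β γ : Type*} [Fintype α] [Fintype β]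
    {f : α → γ} {g : β → γ} (h : Finset.univ.val.map f = Finset.univ.val.map g) :
    ∃ e : α ≃ β, ∀ i, f i = g (e i) := by
  classical
  have card_fiber : ∀ c, Fintype.card {x // f x = c} = Fintype.card {y // g y = c} := by
    intro c
    simp only [Fintype.card_subtype]
    simpa [Multiset.count_map, Finset.card_def, Finset.filter_val, eq_comm]
      using congrArg (Multiset.count c) h
  exact ⟨Equiv.ofFiberEquiv fun c => Fintype.equivOfCardEq (card_fiber c),
    fun i => (Equiv.ofFiberEquiv_map _ i).symm⟩

theorem Matrix.IsHermitian.exists_equiv_eigenvalues_of_charpoly_eq {𝕜 n ι : Type*} [RCLike 𝕜]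
    [Fintype n] [DecidableEq n] [Fintype ι] {A : Matrix n n 𝕜} (hA : A.IsHermitian)
    {w : ι → ℝ} (h : A.charpoly = ∏ j, (X - C (w j : 𝕜))) :
    ∃ σ : n ≃ ι, ∀ i, hA.eigenvalues i = w (σ i) := by
  apply Fintype.exists_equiv_of_map_univ_eq
  have hw : (∏ j, (X - C (w j : 𝕜))).roots = Finset.univ.val.map (RCLike.ofReal ∘ w) := by
    rw [roots_prod _ _ (Finset.prod_ne_zero_iff.mpr fun j _ => X_sub_C_ne_zero _)]
    simp
  have hroots := hA.roots_charpoly_eq_eigenvalues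
  rw [h, hw, ← Multiset.map_map, ← Multiset.map_map] at hroots
  exact (Multiset.map_injective RCLike.ofReal_injective hroots).symm

theorem traceNorm_eq_sum_abs {n ι : Type*} [Fintype n] [DecidableEq n] [Fintype ι]
    {A : Matrix n n ℂ} (hA : A.IsHermitian) {w : ι → ℝ} (σ : n ≃ ι)
    (hσ : ∀ i, hA.eigenvalues i = w (σ i)) : traceNorm A = ∑ j, |w j| := by
  rw [traceNorm, dif_pos hA, ← σ.sum_comp]
  simp only [hσ]

section PartialTranspose

variable {A B : Type*}

theorem ptB_add (ρ τ : Matrix (Fin 2 × (A × B)) (Fin 2 × (A × B)) ℂ) :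
    ptB (ρ + τ) = ptB ρ + ptB τ := rfl

theorem ptB_smul (x : ℂ) (ρ : Matrix (Fin 2 × (A × B)) (Fin 2 × (A × B)) ℂ) :
    ptB (x • ρ) = x • ptB ρ := rfl

theorem ptB_kronecker (E : Matrix (Fin 2) (Fin 2) ℂ) (W : Matrix (A × B) (A × B) ℂ) :
    ptB (E ⊗ₖ W) = E ⊗ₖ ptU W := rfl

theorem ptB_one [DecidableEq A] [DecidableEq B] :
    ptB (1 : Matrix (Fin 2 × (A × B)) (Fin 2 × (A × B)) ℂ) = 1 := by
  ext ⟨c, x, y⟩ ⟨c', x', y'⟩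
  simp [ptB, Matrix.one_apply, Prod.ext_iff, eq_comm (a := y)]

theorem ptU_conjTranspose (U : Matrix (A × B) (A × B) ℂ) : ptU Uᴴ = (ptU U)ᴴ := rfl

def pauliX : Matrix (Fin 2) (Fin 2) ℂ := !![0, 1; 1, 0]

theorem ptB_dqc1State_of_isHermitian [Fintype A] [Fintype B] [DecidableEq A] [DecidableEq B]
    (a : ℝ) {U : Matrix (A × B) (A × B) ℂ} (hU : (ptU U).IsHermitian) :
    ptB (dqc1State a U) =
      (2 * (Fintype.card (A × B) : ℂ))⁻¹ • (1 + (a : ℂ) • (pauliX ⊗ₖ ptU U)) := by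
  have hX : pauliX = Matrix.single 0 1 1 + Matrix.single 1 0 1 := by
    ext i j; fin_cases i <;> fin_cases j <;> simp [pauliX, Matrix.single]
  rw [dqc1State, ptB_smul, ptB_add, ptB_one, ptB_smul, ptB_add, ptB_kronecker, ptB_kronecker,
    ptU_conjTranspose, hU.eq, hX, add_kronecker]

end PartialTranspose

def psiPlus : Fin 2 × Fin 2 → ℂ := fun p => if p.1 = p.2 then 0 else 1

theorem ptU_U2 : ptU U2 = vecMulVec psiPlus psiPlus := by
  ext ⟨x, y⟩ ⟨x', y'⟩
  fin_cases x <;> fin_cases y <;> fin_cases x' <;> fin_cases y' <;>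
    simp [ptU, U2, psiPlus, vecMulVec, Matrix.single]

theorem isHermitian_ptU_U2 : (ptU U2).IsHermitian := by
  have hψ : star psiPlus = psiPlus := by
    funext p; unfold psiPlus; split_ifs <;> simp [*]
  rw [ptU_U2, IsHermitian, conjTranspose_vecMulVec, hψ]

def hadamardGate : Matrix (Fin 2) (Fin 2) ℂ := !![1, 1; 1, -1]

theorem hadamardGate_mul_half_smul_hadamardGate :
    hadamardGate * ((2 : ℂ)⁻¹ • hadamardGate) = 1 := by
  ext i j; fin_cases i <;> fin_cases j <;> simp [hadamardGate, Matrix.mul_apply] <;> norm_num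

theorem pauliX_eq : pauliX = hadamardGate * diagonal ![1, -1] * ((2 : ℂ)⁻¹ • hadamardGate) := by
  ext i j; fin_cases i <;> fin_cases j <;>
    simp [pauliX, hadamardGate, Matrix.mul_apply, Fin.sum_univ_two, vecMul_diagonal] <;> norm_num

-- Columns, indexed by `00, 01, 10, 11`: `e₀₀`, `psiPlus`, `e₀₁ - e₁₀`, `e₁₁`.
def bellBasis : Matrix (Fin 2 × Fin 2) (Fin 2 × Fin 2) ℂ :=
  Matrix.of fun p q =>
    if q = (0, 1) then psiPlus p
    else if q = (1, 0) then (if p = (0, 1) then 1 else if p = (1, 0) then -1 else 0)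
    else if p = q then 1 else 0

noncomputable def bellBasisInv : Matrix (Fin 2 × Fin 2) (Fin 2 × Fin 2) ℂ :=
  Matrix.of fun p q =>
    if p = (0, 1) then psiPlus q / 2
    else if p = (1, 0) then (if q = (0, 1) then 1/2 else if q = (1, 0) then -1/2 else 0)
    else if p = q then 1 else 0

theorem bellBasis_mul_bellBasisInv : bellBasis * bellBasisInv = 1 := by
  ext ⟨x, y⟩ ⟨x', y'⟩
  fin_cases x <;> fin_cases y <;> fin_cases x' <;> fin_cases y' <;>
    simp [bellBasis, bellBasisInv, psiPlus, Matrix.mul_apply, Fintype.sum_prod_type] <;> norm_num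

theorem vecMulVec_psiPlus_eq :
    vecMulVec psiPlus psiPlus =
      bellBasis * diagonal (fun q => if q = (0, 1) then 2 else 0) * bellBasisInv := by
  ext ⟨x, y⟩ ⟨x', y'⟩
  fin_cases x <;> fin_cases y <;> fin_cases x' <;> fin_cases y' <;>
    simp [bellBasis, bellBasisInv, psiPlus, vecMulVec, Matrix.mul_apply, Fintype.sum_prod_type,
      diagonal_apply]

noncomputable def ptSpectrum (a : ℝ) : Fin 8 → ℝ :=
  ![(1 + 2*a)/8, 1/8, 1/8, 1/8, 1/8, 1/8, 1/8, (1 - 2*a)/8]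

theorem charpoly_ptB_dqc1State_U2 (a : ℝ) :
    (ptB (dqc1State a U2)).charpoly = ∏ j, (X - C (ptSpectrum a j : ℂ)) := by
  have hPQ : (hadamardGate ⊗ₖ bellBasis) * (((2 : ℂ)⁻¹ • hadamardGate) ⊗ₖ bellBasisInv) = 1 := by
    rw [← mul_kronecker_mul, hadamardGate_mul_half_smul_hadamardGate, bellBasis_mul_bellBasisInv,
      one_kronecker_one]
  have hcard : (2 * (Fintype.card (Fin 2 × Fin 2) : ℂ))⁻¹ = 8⁻¹ := by norm_num
  rw [ptB_dqc1State_of_isHermitian a isHermitian_ptU_U2, hcard, ptU_U2, pauliX_eq,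
    vecMulVec_psiPlus_eq, mul_kronecker_mul, mul_kronecker_mul, diagonal_kronecker_diagonal,
    charpoly_smul_one_add_smul_mul_mul hPQ, smul_one_add_smul_diagonal, charpoly_diagonal]
  -- keep each eigenvalue inside a single `C`, so that `ring_nf` sees matching factors
  simp [Fintype.prod_prod_type, Fin.prod_univ_eight, ptSpectrum, Prod.ext_iff, -map_add, -map_mul]
  ring_nf

theorem sum_abs_ptSpectrum {a : ℝ} (ha : 0 ≤ a) :
    ∑ j, |ptSpectrum a j| = (7 + 2 * a + |1 - 2 * a|) / 8 := by
  simp only [Fin.sum_univ_eight, ptSpectrum, Matrix.cons_val, abs_div, abs_one,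
    abs_of_nonneg (by linarith : (0 : ℝ) ≤ 1 + 2 * a), abs_of_pos (by norm_num : (0 : ℝ) < 8)]
  ring

theorem stmt_14_general (a : ℝ) (h0 : 0 ≤ a)
    (hh : (ptB (dqc1State a U2)).IsHermitian) :
    (∃ σ : (Fin 2 × (Fin 2 × Fin 2)) ≃ Fin 8,
        ∀ i, hh.eigenvalues i =
          ![(1 + 2*a)/8, 1/8, 1/8, 1/8, 1/8, 1/8, 1/8, (1 - 2*a)/8] (σ i)) ∧
    (a ≤ 1/2 → traceNorm (ptB (dqc1State a U2)) = 1) ∧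
    (1/2 ≤ a → traceNorm (ptB (dqc1State a U2)) = (2*a + 3)/4) := by
  obtain ⟨σ, hσ⟩ := hh.exists_equiv_eigenvalues_of_charpoly_eq (charpoly_ptB_dqc1State_U2 a)
  have htr : traceNorm (ptB (dqc1State a U2)) = (7 + 2 * a + |1 - 2 * a|) / 8 := by
    rw [traceNorm_eq_sum_abs hh (w := ptSpectrum a) σ hσ, sum_abs_ptSpectrum h0]
  refine ⟨⟨σ, hσ⟩, fun ha => ?_, fun ha => ?_⟩
  · rw [htr, abs_of_nonneg (by linarith)]; ring
  · rw [htr, abs_of_nonpos (by linarith)]; ring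

/-- For the three-qubit DQC1 state built from `U₂`, the spectrum of the partial transpose
(across the split separating the two unpolarized qubits) is
`(1/8)(1+2α, 1, 1, 1, 1, 1, 1, 1−2α)`; hence the multiplicative negativity is `1` for
`α ≤ 1/2` and `(2α+3)/4` for `α ≥ 1/2` (equal to `5/4` at `α = 1`). -/
theorem stmt_14 (a : ℝ) (h0 : 0 ≤ a) (h1 : a ≤ 1)
    (hh : (ptB (dqc1State a U2)).IsHermitian) :
    (∃ σ : (Fin 2 × (Fin 2 × Fin 2)) ≃ Fin 8,
        ∀ i, hh.eigenvalues i =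
          ![(1 + 2*a)/8, 1/8, 1/8, 1/8, 1/8, 1/8, 1/8, (1 - 2*a)/8] (σ i)) ∧
    (a ≤ 1/2 → traceNorm (ptB (dqc1State a U2)) = 1) ∧
    (1/2 ≤ a → traceNorm (ptB (dqc1State a U2)) = (2*a + 3)/4) :=
  stmt_14_general a h0 hh
end
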